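/- arXiv:1808.08520 — 2 statements merged into one kernel-verified Lean document; each statement's English description precedes it below -/
import Mathlib

section
/- Let G be a finite abelian group and T ⊆ G with T = T⁻¹ and e ∈ T, satisfying T² = 2G − T^(2) + 2n with |T| = 2n+1. Write T^(4)T = ∑_{i=0}^M i·Y_i where Y_i are the multiplicity classes. Then there exists an integer Δ with −2n ≤ Δ ≤ 0 such that ∑_{i=1}^M |Y_i| = 4n + 1 + Δ + ∑_{s=3}^M ((s−1)(s−2)/2)·|Y_s|. -/
open scoped Pointwise
open Finset

private lemma even_card_of_involution {α : Type*} [DecidableEq α] (f : α → α)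
    (hf : Function.Involutive f) :
    ∀ s : Finset α, (∀ x ∈ s, f x ∈ s) → (∀ x ∈ s, f x ≠ x) → Even s.card := by
  intro s
  induction s using Finset.strongInduction with
  | _ s ih =>
    intro hcl hne
    rcases s.eq_empty_or_nonempty with rfl | ⟨x, hx⟩
    · simp
    · have hfx : f x ∈ s := hcl x hx
      have hxx : f x ≠ x := hne x hx
      have hfx' : f x ∈ s.erase x := mem_erase.2 ⟨hxx, hfx⟩
      have hss : (s.erase x).erase (f x) ⊂ s :=
        ((erase_subset _ _).trans_ssubset (erase_ssubset hx))
      have hcl' : ∀ y ∈ (s.erase x).erase (f x), f y ∈ (s.erase x).erase (f x) := by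
        intro y hy
        obtain ⟨hy1, hy2, hy3⟩ : y ≠ f x ∧ y ≠ x ∧ y ∈ s := by
          simpa [mem_erase, and_assoc] using hy
        refine mem_erase.2 ⟨fun h => hy2 (hf.injective h), mem_erase.2 ⟨fun h => hy1 ?_, hcl y hy3⟩⟩
        rw [← h, hf]
      have hev : Even ((s.erase x).erase (f x)).card :=
        ih _ hss hcl' (fun y hy => hne y (mem_of_mem_erase (mem_of_mem_erase hy)))
      have c2 : ((s.erase x).erase (f x)).card = (s.erase x).card - 1 := card_erase_of_mem hfx'
      have c1 : (s.erase x).card = s.card - 1 := card_erase_of_mem hx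
      have hlt : 1 < s.card := one_lt_card.2 ⟨x, hx, f x, hfx, (hne x hx).symm⟩
      obtain ⟨m, hm⟩ := hev
      exact ⟨m + 1, by omega⟩

private lemma sum_card_mul_card {α β γ : Type*} [DecidableEq α] [DecidableEq β] [Fintype γ]
    [DecidableEq γ] (A : Finset α) (B : Finset β) (f : α → γ) (g : β → γ) :
    ∑ h : γ, (A.filter fun a => f a = h).card * (B.filter fun b => g b = h).card
      = ((A ×ˢ B).filter fun q => f q.1 = g q.2).card := by
  rw [Finset.card_eq_sum_card_fiberwise (f := fun q : α × β => f q.1) (t := Finset.univ)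
    (fun _ _ => mem_univ _)]
  refine Finset.sum_congr rfl fun h _ => ?_
  rw [Finset.filter_filter, ← Finset.card_product]
  congr 1
  ext ⟨a, b⟩
  simp only [Finset.mem_filter, Finset.mem_product]
  aesop

theorem sum_card_Y_eq
    {G : Type*} [CommGroup G] [Fintype G] [DecidableEq G] (n : ℕ) (hn : 2 ≤ n)
    (hG : Fintype.card G = 2 * n ^ 2 + 2 * n + 1)
    (T : Finset G) (hT : T.card = 2 * n + 1)
    (h1 : (1 : G) ∈ T) (hinv : T = T⁻¹)
    (hcount : ∀ g : G, g ≠ 1 →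
      ((T ×ˢ T).filter (fun p => p.1 * p.2 = g)).card =
        if g ∈ T.image (· ^ 2) then 1 else 2)
    (Y : ℕ → Finset G)
    (hY : ∀ i, Y i = Finset.univ.filter (fun g =>
      (((T.image (· ^ 4)) ×ˢ T).filter (fun p => p.1 * p.2 = g)).card = i))
    : ∃ Δ : ℤ, -(2 * (n : ℤ)) ≤ Δ ∧ Δ ≤ 0 ∧
      ((∑ i ∈ Finset.Icc 1 (2 * n + 1), (Y i).card : ℕ) : ℤ) =
        4 * n + 1 + Δ +
          ∑ s ∈ Finset.Icc 3 (2 * n + 1), (((s - 1) * (s - 2) / 2 : ℕ) : ℤ) * (Y s).card := by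
  classical
  set F : Finset G := T.image (· ^ 4) with hF
  set Q : Finset G := T.image (· ^ 2) with hQdef
  set N : G → ℕ := fun g => ((F ×ˢ T).filter (fun p => p.1 * p.2 = g)).card with hN
  -- basic injectivity facts
  have hodd : Odd (Nat.card G) := by
    rw [Nat.card_eq_fintype_card, hG]; exact ⟨n ^ 2 + n, by ring⟩
  have hcop4 : (Nat.card G).Coprime 4 := by
    have := (hodd.coprime_two_right).pow_right 2
    exact (by norm_num : (2 : ℕ) ^ 2 = 4) ▸ this
  have hcop2 : (Nat.card G).Coprime 2 := hodd.coprime_two_right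
  have hinj4 : Function.Injective (fun x : G => x ^ 4) := fun a b hab =>
    (powCoprime hcop4).injective (by simpa [powCoprime_apply] using hab)
  have hinj2 : Function.Injective (fun x : G => x ^ 2) := fun a b hab =>
    (powCoprime hcop2).injective (by simpa [powCoprime_apply] using hab)
  have hsurj4 : Function.Surjective (fun x : G => x ^ 4) :=
    Finite.injective_iff_surjective.mp hinj4
  have hTinv : ∀ x ∈ T, x⁻¹ ∈ T := by
    intro x hx
    rw [hinv]; exact Finset.inv_mem_inv hx
  have hFcard : F.card = 2 * n + 1 := by
    rw [hF, Finset.card_image_of_injective T hinj4, hT]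
  have hQcard : Q.card = 2 * n + 1 := by
    rw [hQdef, Finset.card_image_of_injective T hinj2, hT]
  have h1Q : (1 : G) ∈ Q := by
    rw [hQdef]; exact mem_image.2 ⟨1, h1, one_pow 2⟩
  have hQinv : ∀ z ∈ Q, z⁻¹ ∈ Q := by
    intro z hz
    rw [hQdef] at hz ⊢
    obtain ⟨t, ht, rfl⟩ := mem_image.1 hz
    exact mem_image.2 ⟨t⁻¹, hTinv t ht, inv_pow t 2⟩
  have h1ne4 : ∀ z : G, z ≠ 1 → z ^ 4 ≠ 1 := fun z hz h =>
    hz (hinj4 (show z ^ 4 = 1 ^ 4 by simpa using h))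
  -- bound on multiplicities
  have hNle : ∀ g : G, N g ≤ 2 * n + 1 := by
    intro g
    rw [← hT]
    apply Finset.card_le_card_of_injOn (fun p => p.2)
    · intro p hp
      simp only [mem_coe, mem_filter, mem_product] at hp
      exact hp.1.2
    · intro p hp q hq hpq
      simp only [coe_filter, Set.mem_setOf_eq, mem_product] at hp hq
      have hpq' : p.2 = q.2 := hpq
      have h1' : p.1 * p.2 = q.1 * q.2 := hp.2.trans hq.2.symm
      have : p.1 = q.1 := by
        rw [hpq'] at h1'
        exact mul_right_cancel h1'
      exact Prod.ext this hpq'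
  -- first moment
  have hsum1 : ∑ g : G, N g = (2 * n + 1) * (2 * n + 1) := by
    have h := Finset.card_eq_sum_card_fiberwise
      (s := F ×ˢ T) (t := univ) (f := fun p => p.1 * p.2) (fun _ _ => mem_univ _)
    rw [Finset.card_product, hFcard, hT] at h
    exact h.symm
  -- r' = r for T
  have hr'eq : ∀ h : G, ((T ×ˢ T).filter (fun p => p.1 * p.2⁻¹ = h)).card
      = ((T ×ˢ T).filter (fun p => p.1 * p.2 = h)).card := by
    intro h
    refine Finset.card_nbij' (fun p => (p.1, p.2⁻¹)) (fun p => (p.1, p.2⁻¹)) ?_ ?_ ?_ ?_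
    · intro p hp
      simp only [mem_coe, mem_filter, mem_product] at hp ⊢
      exact ⟨⟨hp.1.1, hTinv _ hp.1.2⟩, hp.2⟩
    · intro p hp
      simp only [mem_coe, mem_filter, mem_product] at hp ⊢
      exact ⟨⟨hp.1.1, hTinv _ hp.1.2⟩, by simpa using hp.2⟩
    · intro p _; simp
    · intro p _; simp
  have hr1 : ((T ×ˢ T).filter (fun p => p.1 * p.2 = (1 : G))).card = 2 * n + 1 := by
    rw [← hT]
    refine Finset.card_nbij' (fun p => p.1) (fun t => (t, t⁻¹)) ?_ ?_ ?_ ?_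
    · intro p hp
      simp only [mem_coe, mem_filter, mem_product] at hp
      exact hp.1.1
    · intro t ht
      simp only [mem_coe, mem_filter, mem_product]
      exact ⟨⟨ht, hTinv _ ht⟩, mul_inv_cancel t⟩
    · intro p hp
      simp only [mem_coe, mem_filter, mem_product] at hp
      have : p.2 = p.1⁻¹ := eq_inv_of_mul_eq_one_right hp.2
      exact Prod.ext rfl this.symm
    · intro t _; rfl
  -- step a : second moment as a card
  have hs2a : ∑ g : G, N g * N g
      = (((F ×ˢ T) ×ˢ (F ×ˢ T)).filter fun q => q.1.1 * q.1.2 = q.2.1 * q.2.2).card := by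
    have h := sum_card_mul_card (F ×ˢ T) (F ×ˢ T)
      (fun p => p.1 * p.2) (fun p => p.1 * p.2)
    simpa using h
  -- step b : swap to difference representation
  have hiff : ∀ a b t u : G, a * t = b * u ↔ a * b⁻¹ = u * t⁻¹ := fun a b t u => by
    rw [← div_eq_mul_inv, ← div_eq_mul_inv, div_eq_div_iff_mul_eq_mul, mul_comm u b]
  have hcardeq : (((F ×ˢ T) ×ˢ (F ×ˢ T)).filter fun q => q.1.1 * q.1.2 = q.2.1 * q.2.2).card
      = (((F ×ˢ F) ×ˢ (T ×ˢ T)).filter fun q => q.1.1 * q.1.2⁻¹ = q.2.1 * q.2.2⁻¹).card := by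
    refine Finset.card_nbij' (fun q => ((q.1.1, q.2.1), (q.2.2, q.1.2)))
      (fun q => ((q.1.1, q.2.2), (q.1.2, q.2.1))) ?_ ?_ ?_ ?_
    · intro q hq
      simp only [mem_coe, mem_filter, mem_product] at hq ⊢
      obtain ⟨⟨⟨ha, ht⟩, hb, hu⟩, hcond⟩ := hq
      exact ⟨⟨⟨ha, hb⟩, hu, ht⟩, (hiff _ _ _ _).1 hcond⟩
    · intro q hq
      simp only [mem_coe, mem_filter, mem_product] at hq ⊢
      obtain ⟨⟨⟨ha, hb⟩, hu, ht⟩, hcond⟩ := hq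
      exact ⟨⟨⟨ha, ht⟩, hb, hu⟩, (hiff _ _ _ _).2 hcond⟩
    · intro q _; rfl
    · intro q _; rfl
  -- step c : back to a sum over differences
  have hs2b : (((F ×ˢ F) ×ˢ (T ×ˢ T)).filter fun q => q.1.1 * q.1.2⁻¹ = q.2.1 * q.2.2⁻¹).card
      = ∑ h : G, ((F ×ˢ F).filter (fun p => p.1 * p.2⁻¹ = h)).card
          * ((T ×ˢ T).filter (fun p => p.1 * p.2⁻¹ = h)).card := by
    have h := sum_card_mul_card (F ×ˢ F) (T ×ˢ T)
      (fun p => p.1 * p.2⁻¹) (fun p => p.1 * p.2⁻¹)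
    simpa using h.symm
  -- step d : difference counts of F are those of T at fourth roots
  have hr'F4 : ∀ z : G, ((F ×ˢ F).filter (fun p => p.1 * p.2⁻¹ = z ^ 4)).card
      = ((T ×ˢ T).filter (fun p => p.1 * p.2⁻¹ = z)).card := by
    intro z
    symm
    refine Finset.card_nbij (fun p => (p.1 ^ 4, p.2 ^ 4)) ?_ ?_ ?_
    · intro p hp
      simp only [mem_coe, mem_filter, mem_product] at hp ⊢
      refine ⟨⟨?_, ?_⟩, ?_⟩
      · rw [hF]; exact mem_image_of_mem _ hp.1.1
      · rw [hF]; exact mem_image_of_mem _ hp.1.2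
      · rw [← inv_pow, ← mul_pow, hp.2]
    · intro p _ q _ hpq
      simp only [Prod.ext_iff] at hpq ⊢
      exact ⟨hinj4 hpq.1, hinj4 hpq.2⟩
    · intro b hb
      simp only [coe_filter, Set.mem_setOf_eq, mem_product, Set.mem_image] at hb ⊢
      obtain ⟨⟨hb1, hb2⟩, hcond⟩ := hb
      rw [hF] at hb1 hb2
      obtain ⟨x, hx, hx4⟩ := mem_image.1 hb1
      obtain ⟨y, hy, hy4⟩ := mem_image.1 hb2
      refine ⟨(x, y), ⟨⟨⟨hx, hy⟩, ?_⟩, ?_⟩⟩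
      · apply hinj4
        show (x * y⁻¹) ^ 4 = z ^ 4
        rw [mul_pow, inv_pow, hx4, hy4, hcond]
      · simp only [Prod.ext_iff]
        exact ⟨hx4, hy4⟩
  -- step e : reindex by fourth powers
  have hreindex : (∑ h : G, ((F ×ˢ F).filter (fun p => p.1 * p.2⁻¹ = h)).card
          * ((T ×ˢ T).filter (fun p => p.1 * p.2⁻¹ = h)).card)
      = ∑ z : G, ((T ×ˢ T).filter (fun p => p.1 * p.2⁻¹ = z)).card
          * ((T ×ˢ T).filter (fun p => p.1 * p.2⁻¹ = z ^ 4)).card := by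
    rw [← Equiv.sum_comp (Equiv.ofBijective _ ⟨hinj4, hsurj4⟩)
      (fun h => ((F ×ˢ F).filter (fun p => p.1 * p.2⁻¹ = h)).card
          * ((T ×ˢ T).filter (fun p => p.1 * p.2⁻¹ = h)).card)]
    refine Fintype.sum_congr _ _ fun z => ?_
    show ((F ×ˢ F).filter (fun p => p.1 * p.2⁻¹ = z ^ 4)).card
        * ((T ×ˢ T).filter (fun p => p.1 * p.2⁻¹ = z ^ 4)).card = _
    rw [hr'F4 z]
  -- the key intersection count
  set k := (univ.filter (fun z : G => z ∈ Q ∧ z ^ 4 ∈ Q)).card with hk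
  have h1k : (1 : G) ∈ univ.filter (fun z : G => z ∈ Q ∧ z ^ 4 ∈ Q) := by
    simp only [mem_filter, mem_univ, true_and, one_pow]
    exact ⟨h1Q, h1Q⟩
  have hk1 : 1 ≤ k := by
    rw [hk]
    exact card_pos.2 ⟨1, h1k⟩
  have hkQ : k ≤ 2 * n + 1 := by
    rw [hk, ← hQcard]
    exact card_le_card (fun z hz => (mem_filter.1 hz).2.1)
  -- split off z = 1
  have hsplit : (∑ z : G, ((T ×ˢ T).filter (fun p => p.1 * p.2⁻¹ = z)).card
        * ((T ×ˢ T).filter (fun p => p.1 * p.2⁻¹ = z ^ 4)).card)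
      = (2 * n + 1) * (2 * n + 1) + ∑ z ∈ univ.erase 1,
          (if z ∈ Q then 1 else 2) * (if z ^ 4 ∈ Q then 1 else 2) := by
    rw [← Finset.add_sum_erase univ _ (mem_univ (1 : G))]
    congr 1
    · rw [hr'eq, hr'eq, one_pow, hr1]
    · refine Finset.sum_congr rfl fun z hz => ?_
      have hz1 : z ≠ 1 := (mem_erase.1 hz).1
      rw [hr'eq, hr'eq, hcount z hz1, hcount _ (h1ne4 z hz1)]
  -- cardinalities of the pieces
  have c0 : (univ.erase (1 : G)).card = 2 * n ^ 2 + 2 * n := by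
    rw [card_erase_of_mem (mem_univ _), card_univ, hG]
    omega
  have cQ : ((univ.erase (1 : G)).filter (fun z => z ∈ Q)).card = 2 * n := by
    have e : (univ.erase (1 : G)).filter (fun z => z ∈ Q) = Q.erase 1 := by
      ext z; simp [mem_erase, and_comm]
    rw [e, card_erase_of_mem h1Q, hQcard]
    omega
  have hR : (univ.filter (fun z : G => z ^ 4 ∈ Q)).card = 2 * n + 1 := by
    rw [← hQcard]
    refine Finset.card_nbij (fun z => z ^ 4) ?_ ?_ ?_
    · intro z hz; exact (mem_filter.1 hz).2
    · intro a _ b _ hab; exact hinj4 hab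
    · intro q hq
      obtain ⟨z, hz⟩ := hsurj4 q
      refine ⟨z, ?_, hz⟩
      simp only [coe_filter, Set.mem_setOf_eq, mem_univ, true_and]
      rw [show z ^ 4 = q from hz]
      exact hq
  have c4 : ((univ.erase (1 : G)).filter (fun z => z ^ 4 ∈ Q)).card = 2 * n := by
    have e : (univ.erase (1 : G)).filter (fun z => z ^ 4 ∈ Q)
        = (univ.filter (fun z : G => z ^ 4 ∈ Q)).erase 1 := by
      ext z; simp only [mem_erase, mem_filter, mem_univ, true_and]; tauto
    rw [e, card_erase_of_mem (by simp only [mem_filter, mem_univ, true_and, one_pow]; exact h1Q),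
      hR]
    omega
  have cB : ((univ.erase (1 : G)).filter (fun z => z ∈ Q ∧ z ^ 4 ∈ Q)).card = k - 1 := by
    have e : (univ.erase (1 : G)).filter (fun z => z ∈ Q ∧ z ^ 4 ∈ Q)
        = (univ.filter (fun z : G => z ∈ Q ∧ z ^ 4 ∈ Q)).erase 1 := by
      ext z; simp only [mem_erase, mem_filter, mem_univ, true_and]; tauto
    rw [e, card_erase_of_mem h1k, ← hk]
  -- the erase-sum, in ℤ
  have hSZ : ((∑ z ∈ univ.erase (1 : G),
        (if z ∈ Q then 1 else 2) * (if z ^ 4 ∈ Q then 1 else 2) : ℕ) : ℤ)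
      = 8 * (n : ℤ) ^ 2 + (k : ℤ) - 1 := by
    push_cast
    have e : ∀ z ∈ univ.erase (1 : G),
        ((if z ∈ Q then (1 : ℤ) else 2) * (if z ^ 4 ∈ Q then 1 else 2))
        = 4 - 2 * (if z ∈ Q then (1 : ℤ) else 0) - 2 * (if z ^ 4 ∈ Q then (1 : ℤ) else 0)
          + (if z ∈ Q ∧ z ^ 4 ∈ Q then (1 : ℤ) else 0) := by
      intro z _
      by_cases ha : z ∈ Q <;> by_cases hb : z ^ 4 ∈ Q <;> simp [ha, hb]
    rw [Finset.sum_congr rfl e, Finset.sum_add_distrib, Finset.sum_sub_distrib,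
      Finset.sum_sub_distrib, Finset.sum_const, ← Finset.mul_sum, ← Finset.mul_sum,
      Finset.sum_boole, Finset.sum_boole, Finset.sum_boole, cQ, c4, cB, c0,
      Nat.cast_sub hk1]
    push_cast
    ring
  -- combine : second moment value
  have hsum2Z : (∑ g : G, (N g : ℤ) * (N g : ℤ))
      = (2 * (n : ℤ) + 1) * (2 * n + 1) + 8 * n ^ 2 + (k : ℤ) - 1 := by
    have h2 : ∑ g : G, N g * N g
        = (2 * n + 1) * (2 * n + 1) + ∑ z ∈ univ.erase 1,
            (if z ∈ Q then 1 else 2) * (if z ^ 4 ∈ Q then 1 else 2) := by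
      rw [hs2a, hcardeq, hs2b, hreindex, hsplit]
    have h3 := congrArg (Nat.cast : ℕ → ℤ) h2
    rw [Nat.cast_add] at h3
    rw [hSZ] at h3
    push_cast at h3
    rw [h3]; ring
  -- parity of k
  have heven : Even ((univ.filter (fun z : G => z ∈ Q ∧ z ^ 4 ∈ Q)).erase 1).card := by
    refine even_card_of_involution (fun z : G => z⁻¹) (fun z => inv_inv z) _ ?_ ?_
    · intro x hx
      simp only [mem_erase, mem_filter, mem_univ, true_and] at hx ⊢
      obtain ⟨hx1, hxQ, hx4⟩ := hx
      refine ⟨fun h => hx1 ?_, hQinv _ hxQ, ?_⟩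
      · rwa [inv_eq_one] at h
      · rw [inv_pow]
        exact hQinv _ hx4
    · intro x hx h
      have hx1 : x ≠ 1 := (mem_erase.1 hx).1
      apply hx1
      apply hinj2
      show x ^ 2 = 1 ^ 2
      have h' : x⁻¹ = x := h
      have hxx : x * x = 1 := by
        have h2 : x * x⁻¹ = 1 := mul_inv_cancel x
        rwa [h'] at h2
      rw [one_pow, pow_two, hxx]
  obtain ⟨m, hm⟩ := heven
  have hcardE : ((univ.filter (fun z : G => z ∈ Q ∧ z ^ 4 ∈ Q)).erase 1).card = k - 1 := by
    rw [card_erase_of_mem h1k, ← hk]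
  rw [hcardE] at hm
  have hkm : k = 2 * m + 1 := by omega
  have hmn : m ≤ n := by omega
  -- conversion of the goal sums
  have hY' : ∀ i, Y i = univ.filter (fun g => N g = i) := by
    intro i
    simp only [hN]
    exact hY i
  refine ⟨-(m : ℤ), by omega, by omega, ?_⟩
  have hcard : ∀ i : ℕ, ((Y i).card : ℤ) = ∑ g : G, (if N g = i then (1 : ℤ) else 0) := by
    intro i
    rw [hY' i, Finset.card_filter]
    push_cast
    rfl
  have hA : ((∑ i ∈ Finset.Icc 1 (2 * n + 1), (Y i).card : ℕ) : ℤ)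
      = ∑ g : G, (if 1 ≤ N g then (1 : ℤ) else 0) := by
    push_cast
    rw [Finset.sum_congr rfl (fun i _ => hcard i), Finset.sum_comm]
    refine Finset.sum_congr rfl fun g _ => ?_
    rw [Finset.sum_ite_eq (Finset.Icc 1 (2 * n + 1)) (N g) (fun _ => (1 : ℤ))]
    have h2 : (N g ∈ Finset.Icc 1 (2 * n + 1)) ↔ 1 ≤ N g := by
      rw [Finset.mem_Icc]; exact and_iff_left (hNle g)
    simp only [h2]
  have hB : (∑ s ∈ Finset.Icc 3 (2 * n + 1), (((s - 1) * (s - 2) / 2 : ℕ) : ℤ) * (Y s).card)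
      = ∑ g : G, (if 3 ≤ N g then (((N g - 1) * (N g - 2) / 2 : ℕ) : ℤ) else 0) := by
    have e1 : ∀ s ∈ Finset.Icc 3 (2 * n + 1),
        (((s - 1) * (s - 2) / 2 : ℕ) : ℤ) * (Y s).card
        = ∑ g : G, (if N g = s then (((s - 1) * (s - 2) / 2 : ℕ) : ℤ) else 0) := by
      intro s _
      rw [hcard s, Finset.mul_sum]
      refine Finset.sum_congr rfl fun g _ => ?_
      by_cases h : N g = s <;> simp [h]
    rw [Finset.sum_congr rfl e1, Finset.sum_comm]
    refine Finset.sum_congr rfl fun g _ => ?_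
    rw [Finset.sum_ite_eq (Finset.Icc 3 (2 * n + 1)) (N g)
      (fun s => (((s - 1) * (s - 2) / 2 : ℕ) : ℤ))]
    have h2 : (N g ∈ Finset.Icc 3 (2 * n + 1)) ↔ 3 ≤ N g := by
      rw [Finset.mem_Icc]; exact and_iff_left (hNle g)
    simp only [h2]
  rw [hA, hB]
  -- pointwise identity
  have hpt : ∀ g : G, 2 * ((if 1 ≤ N g then (1 : ℤ) else 0)
        - (if 3 ≤ N g then (((N g - 1) * (N g - 2) / 2 : ℕ) : ℤ) else 0))
      = 3 * (N g : ℤ) - (N g : ℤ) * (N g : ℤ) := by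
    intro g
    rcases Nat.lt_or_ge (N g) 3 with h | h
    · have h' : N g = 0 ∨ N g = 1 ∨ N g = 2 := by omega
      rcases h' with h' | h' | h' <;> rw [h'] <;> norm_num
    · obtain ⟨r, hr⟩ : ∃ r, N g = r + 3 := ⟨N g - 3, by omega⟩
      rw [hr, if_pos (by omega : (1 : ℕ) ≤ r + 3), if_pos (by omega : (3 : ℕ) ≤ r + 3)]
      have e1 : r + 3 - 1 = r + 2 := by omega
      have e2 : r + 3 - 2 = r + 1 := by omega
      rw [e1, e2]
      have e3 : r + 1 + 1 = r + 2 := by omega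
      have h2 := Nat.even_mul_succ_self (r + 1)
      rw [e3] at h2
      have hdvd : 2 ∣ (r + 2) * (r + 1) := by
        rw [mul_comm]; exact h2.two_dvd
      have hq : ((r + 2) * (r + 1) / 2 : ℕ) * 2 = (r + 2) * (r + 1) :=
        Nat.div_mul_cancel hdvd
      have hqZ : (((r + 2) * (r + 1) / 2 : ℕ) : ℤ) * 2 = ((r : ℤ) + 2) * ((r : ℤ) + 1) := by
        exact_mod_cast congrArg (Nat.cast : ℕ → ℤ) hq
      have hr3 : ((r + 3 : ℕ) : ℤ) = (r : ℤ) + 3 := by push_cast; ring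
      rw [hr3]
      linear_combination (-1 : ℤ) * hqZ
  -- final computation
  have hS1 : (∑ g : G, (N g : ℤ)) = (2 * (n : ℤ) + 1) * (2 * (n : ℤ) + 1) := by
    have h' := congrArg (Nat.cast : ℕ → ℤ) hsum1
    push_cast at h'
    exact h'
  have hkey : 2 * ((∑ g : G, (if 1 ≤ N g then (1 : ℤ) else 0))
        - ∑ g : G, (if 3 ≤ N g then (((N g - 1) * (N g - 2) / 2 : ℕ) : ℤ) else 0))
      = 3 * ((2 * (n : ℤ) + 1) * (2 * (n : ℤ) + 1))
        - ((2 * (n : ℤ) + 1) * (2 * n + 1) + 8 * n ^ 2 + (k : ℤ) - 1) := by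
    rw [← Finset.sum_sub_distrib, Finset.mul_sum,
      Finset.sum_congr rfl (fun g _ => hpt g),
      Finset.sum_sub_distrib, ← Finset.mul_sum, hS1, hsum2Z]
  have hkZ : (k : ℤ) = 2 * m + 1 := by exact_mod_cast congrArg (Nat.cast : ℕ → ℤ) hkm
  rw [hkZ] at hkey
  linarith [hkey]
end

section
/- Under the lattice tiling group ring conditions, with Y_i the multiplicity classes of T^(4)T, the inequality 2|Y₁| + 3|Y₂| + 3|Y₃| + 2|Y₄| ≥ 4n² + 6n + 2 holds. -/
open scoped Pointwise

private lemma inj4_aux {G : Type*} [CommGroup G] [Fintype G] (hodd : Odd (Fintype.card G)) :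
    Function.Injective (fun g : G => g ^ 4) := by
  intro a b hab
  simp only at hab
  have h : (a * b⁻¹) ^ 4 = 1 := by
    rw [mul_pow, hab, inv_pow, mul_inv_cancel]
  have hord : orderOf (a * b⁻¹) ∣ 4 := orderOf_dvd_of_pow_eq_one h
  have hord2 : orderOf (a * b⁻¹) ∣ Fintype.card G := orderOf_dvd_card
  have hcop : Nat.Coprime 4 (Fintype.card G) := by
    have h2 : Nat.Coprime 2 (Fintype.card G) := Nat.coprime_two_left.mpr hodd
    exact (h2.pow_left 2 : Nat.Coprime (2 ^ 2) _)
  have h1 : orderOf (a * b⁻¹) = 1 := Nat.eq_one_of_dvd_coprimes hcop hord hord2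
  have := orderOf_eq_one_iff.mp h1
  rwa [mul_inv_eq_one] at this

private lemma pointwise_bound_aux (m : ℕ) :
    5 * m ≤ m ^ 2 + (4 * (if m = 1 then 1 else 0) + 6 * (if m = 2 then 1 else 0)
      + 6 * (if m = 3 then 1 else 0) + 4 * (if m = 4 then 1 else 0)) := by
  rcases Nat.lt_or_ge m 5 with h | h
  · interval_cases m <;> simp
  · have h1 : m ≠ 1 := by omega
    have h2 : m ≠ 2 := by omega
    have h3 : m ≠ 3 := by omega
    have h4 : m ≠ 4 := by omega
    simp only [h1, h2, h3, h4, if_false, mul_zero, add_zero]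
    nlinarith

private lemma sum_sq_bound_aux
    {G : Type*} [CommGroup G] [Fintype G] [DecidableEq G] (n : ℕ)
    (T S : Finset G) (hT : T.card = 2 * n + 1) (hScard : S.card = 2 * n + 1)
    (keyA : ∀ k : G, k ≠ 1 → (S.filter (fun b => b * k ∈ S)).card ≤ 2)
    (r : G → ℕ) (hrdef : r = fun g => ((S ×ˢ T).filter (fun p => p.1 * p.2 = g)).card) :
    ∑ g : G, (r g) ^ 2 ≤ 12 * n ^ 2 + 8 * n + 1 := by
  classical
  set P : Finset ((G × G) × (G × G)) :=
    ((S ×ˢ T) ×ˢ (S ×ˢ T)).filter (fun q => q.1.1 * q.1.2 = q.2.1 * q.2.2) with hPdef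
  have hPcard : P.card = ∑ g : G, (r g) ^ 2 := by
    have h := Finset.card_eq_sum_card_fiberwise (s := P) (t := Finset.univ)
      (f := fun q => q.1.1 * q.1.2) (fun x _ => Finset.mem_univ _)
    rw [h]
    refine Finset.sum_congr rfl (fun g _ => ?_)
    have hfe : P.filter (fun q => q.1.1 * q.1.2 = g) =
        ((S ×ˢ T).filter (fun p => p.1 * p.2 = g)) ×ˢ ((S ×ˢ T).filter (fun p => p.1 * p.2 = g)) := by
      ext q
      simp only [hPdef, Finset.mem_filter, Finset.mem_product]
      constructor
      · rintro ⟨⟨⟨hq1, hq2⟩, heq⟩, hg⟩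
        exact ⟨⟨hq1, hg⟩, hq2, by rw [← heq, hg]⟩
      · rintro ⟨⟨hq1, hg1⟩, hq2, hg2⟩
        exact ⟨⟨⟨hq1, hq2⟩, by rw [hg1, hg2]⟩, hg1⟩
    rw [hfe, Finset.card_product, pow_two, hrdef]
  have hP2 : P.card = ∑ p ∈ T ×ˢ T, (P.filter (fun q => (q.1.2, q.2.2) = p)).card := by
    apply Finset.card_eq_sum_card_fiberwise
    intro q (hq : q ∈ P)
    simp only [hPdef, Finset.mem_filter, Finset.mem_product] at hq
    exact Finset.mem_product.mpr ⟨hq.1.1.2, hq.1.2.2⟩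
  have hfib : ∀ p ∈ T ×ˢ T, (P.filter (fun q => (q.1.2, q.2.2) = p)).card ≤
      if p.1 = p.2 then 2 * n + 1 else 2 := by
    intro p _
    have hsub : (P.filter (fun q => (q.1.2, q.2.2) = p)).card ≤
        (S.filter (fun b => b * (p.2 * p.1⁻¹) ∈ S)).card := by
      apply Finset.card_le_card_of_injOn (fun q => q.2.1)
      · intro q (hq : q ∈ P.filter (fun q => (q.1.2, q.2.2) = p))
        simp only [hPdef, Finset.mem_filter, Finset.mem_product] at hq
        obtain ⟨⟨⟨⟨ha, _⟩, hb, _⟩, heq⟩, hp⟩ := hq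
        subst hp
        refine Finset.mem_filter.mpr ⟨hb, ?_⟩
        show q.2.1 * (q.2.2 * q.1.2⁻¹) ∈ S
        have hkey : q.2.1 * (q.2.2 * q.1.2⁻¹) = q.1.1 := by
          rw [← mul_assoc, ← heq, mul_inv_cancel_right]
        rw [hkey]; exact ha
      · intro a ha b hb hab
        simp only [hPdef, Finset.coe_filter, Set.mem_setOf_eq, Finset.mem_filter,
          Finset.mem_product] at ha hb
        obtain ⟨⟨_, heqa⟩, hpa⟩ := ha
        obtain ⟨⟨_, heqb⟩, hpb⟩ := hb
        have hpp : ((a.1.2, a.2.2) : G × G) = (b.1.2, b.2.2) := hpa.trans hpb.symm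
        have h12 : a.1.2 = b.1.2 := (Prod.ext_iff.mp hpp).1
        have h22 : a.2.2 = b.2.2 := (Prod.ext_iff.mp hpp).2
        have hab' : a.2.1 = b.2.1 := hab
        have e1 : a.1.1 = b.1.1 := by
          have hc : a.1.1 * a.1.2 = b.1.1 * a.1.2 := by
            rw [heqa, hab', h22, ← heqb, h12]
          exact mul_right_cancel hc
        have e2 : a.1 = b.1 := Prod.ext e1 h12
        have e3 : a.2 = b.2 := Prod.ext hab' h22
        exact Prod.ext e2 e3
    split_ifs with hd
    · calc (P.filter (fun q => (q.1.2, q.2.2) = p)).card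
          ≤ (S.filter (fun b => b * (p.2 * p.1⁻¹) ∈ S)).card := hsub
        _ ≤ S.card := Finset.card_le_card (Finset.filter_subset _ _)
        _ = 2 * n + 1 := hScard
    · refine hsub.trans (keyA _ fun hcon => hd ?_)
      rw [mul_inv_eq_one] at hcon
      exact hcon.symm
  have hsumite : ∑ p ∈ T ×ˢ T, (if p.1 = p.2 then 2 * n + 1 else 2) = 12 * n ^ 2 + 8 * n + 1 := by
    rw [Finset.sum_ite, Finset.sum_const, Finset.sum_const, smul_eq_mul, smul_eq_mul]
    have hdiag : ((T ×ˢ T).filter (fun p => p.1 = p.2)).card = 2 * n + 1 := by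
      have : (T ×ˢ T).filter (fun p => p.1 = p.2) = T.image (fun t => (t, t)) := by
        ext p
        simp only [Finset.mem_filter, Finset.mem_product, Finset.mem_image]
        constructor
        · rintro ⟨⟨h1, _⟩, h3⟩
          exact ⟨p.1, h1, Prod.ext rfl h3⟩
        · rintro ⟨t, ht, rfl⟩
          exact ⟨⟨ht, ht⟩, rfl⟩
      rw [this, Finset.card_image_of_injective _ (fun a b h => congrArg Prod.fst h), hT]
    have htot : ((T ×ˢ T).filter (fun p => p.1 = p.2)).card
        + ((T ×ˢ T).filter (fun p => ¬ p.1 = p.2)).card = (2 * n + 1) * (2 * n + 1) := by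
      rw [Finset.card_filter_add_card_filter_not, Finset.card_product, hT]
    have hoff : ((T ×ˢ T).filter (fun p => ¬ p.1 = p.2)).card = 4 * n ^ 2 + 2 * n := by
      have hx : (2 * n + 1) * (2 * n + 1) = 4 * n ^ 2 + 4 * n + 1 := by ring
      omega
    rw [hdiag, hoff]
    ring
  calc ∑ g : G, (r g) ^ 2 = P.card := hPcard.symm
    _ = ∑ p ∈ T ×ˢ T, (P.filter (fun q => (q.1.2, q.2.2) = p)).card := hP2
    _ ≤ ∑ p ∈ T ×ˢ T, (if p.1 = p.2 then 2 * n + 1 else 2) := Finset.sum_le_sum hfib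
    _ = 12 * n ^ 2 + 8 * n + 1 := hsumite

theorem Y_card_lower_bound
    {G : Type*} [CommGroup G] [Fintype G] [DecidableEq G] (n : ℕ) (hn : 2 ≤ n)
    (hG : Fintype.card G = 2 * n ^ 2 + 2 * n + 1)
    (T : Finset G) (hT : T.card = 2 * n + 1)
    (h1 : (1 : G) ∈ T) (hinv : T = T⁻¹)
    (hcount : ∀ g : G, g ≠ 1 →
      ((T ×ˢ T).filter (fun p => p.1 * p.2 = g)).card =
        if g ∈ T.image (· ^ 2) then 1 else 2)
    (Y : ℕ → Finset G)
    (hY : ∀ i, Y i = Finset.univ.filter (fun g =>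
      (((T.image (· ^ 4)) ×ˢ T).filter (fun p => p.1 * p.2 = g)).card = i))
    : 4 * n ^ 2 + 6 * n + 2 ≤
        2 * (Y 1).card + 3 * (Y 2).card + 3 * (Y 3).card + 2 * (Y 4).card := by
  classical
  set S : Finset G := T.image (fun x => x ^ 4) with hSdef
  set r : G → ℕ := fun g => ((S ×ˢ T).filter (fun p => p.1 * p.2 = g)).card with hrdef
  have hodd : Odd (Fintype.card G) := ⟨n ^ 2 + n, by rw [hG]; ring⟩
  have hinj : Function.Injective (fun g : G => g ^ 4) := inj4_aux hodd
  have hsurj : Function.Surjective (fun g : G => g ^ 4) :=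
    Finite.surjective_of_injective hinj
  have hScard : S.card = 2 * n + 1 := by
    rw [hSdef, Finset.card_image_of_injective _ hinj, hT]
  have hTinv : ∀ y : G, y ∈ T → y⁻¹ ∈ T := by
    intro y hy
    have : y⁻¹ ∈ T⁻¹ := by simpa using Finset.inv_mem_inv hy
    rwa [← hinv] at this
  have key2 : ∀ h : G, h ≠ 1 → (T.filter (fun y => y * h ∈ T)).card ≤ 2 := by
    intro h hne
    have hmap : ∀ y ∈ T.filter (fun y => y * h ∈ T),
        (y * h, y⁻¹) ∈ (T ×ˢ T).filter (fun p => p.1 * p.2 = h) := by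
      intro y hy
      simp only [Finset.mem_filter, Finset.mem_product] at hy ⊢
      refine ⟨⟨hy.2, hTinv y hy.1⟩, ?_⟩
      rw [mul_comm y h, mul_assoc, mul_inv_cancel, mul_one]
    have hinj' : Set.InjOn (fun y => (y * h, y⁻¹)) (T.filter (fun y => y * h ∈ T)) := by
      intro a _ b _ hab
      have := congrArg Prod.snd hab
      simpa using this
    have := Finset.card_le_card_of_injOn _ hmap hinj'
    rw [hcount h hne] at this
    split_ifs at this <;> omega
  have keyA : ∀ k : G, k ≠ 1 → (S.filter (fun b => b * k ∈ S)).card ≤ 2 := by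
    intro k hk
    obtain ⟨h, hh⟩ := hsurj k
    simp only at hh
    have hne : h ≠ 1 := by rintro rfl; simp at hh; exact hk hh.symm
    have heq : S.filter (fun b => b * k ∈ S)
        = (T.filter (fun y => y * h ∈ T)).image (fun x => x ^ 4) := by
      ext b
      simp only [Finset.mem_filter, Finset.mem_image, hSdef]
      constructor
      · rintro ⟨⟨y, hy, rfl⟩, ⟨x, hx, hxe⟩⟩
        refine ⟨y, ⟨hy, ?_⟩, rfl⟩
        have hx4 : x ^ 4 = (y * h) ^ 4 := by rw [hxe, mul_pow, hh]
        have hxy := hinj hx4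
        rwa [← hxy]
      · rintro ⟨y, ⟨hy, hyh⟩, rfl⟩
        exact ⟨⟨y, hy, rfl⟩, ⟨y * h, hyh, by rw [mul_pow, hh]⟩⟩
    rw [heq, Finset.card_image_of_injective _ hinj]
    exact key2 h hne
  have hsum : ∑ g : G, r g = (2 * n + 1) ^ 2 := by
    have h := Finset.card_eq_sum_card_fiberwise (s := S ×ˢ T) (t := Finset.univ)
      (f := fun p => p.1 * p.2) (fun x _ => Finset.mem_univ _)
    rw [Finset.card_product, hScard, hT] at h
    simp only [hrdef]
    rw [← h]
    ring
  have hQ : ∑ g : G, (r g) ^ 2 ≤ 12 * n ^ 2 + 8 * n + 1 :=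
    sum_sq_bound_aux n T S hT hScard keyA r hrdef
  have hYc : ∀ i, (Y i).card = ∑ g : G, (if r g = i then 1 else 0) := by
    intro i
    rw [hY i, Finset.card_filter]
  have hW : ∑ g : G, (4 * (if r g = 1 then 1 else 0) + 6 * (if r g = 2 then 1 else 0)
      + 6 * (if r g = 3 then 1 else 0) + 4 * (if r g = 4 then 1 else 0))
      = 4 * (Y 1).card + 6 * (Y 2).card + 6 * (Y 3).card + 4 * (Y 4).card := by
    rw [hYc 1, hYc 2, hYc 3, hYc 4]
    simp only [Finset.sum_add_distrib, Finset.mul_sum]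
  have key := Finset.sum_le_sum (fun g (_ : g ∈ (Finset.univ : Finset G)) =>
    pointwise_bound_aux (r g))
  rw [Finset.sum_add_distrib, hW, ← Finset.mul_sum, hsum] at key
  have hexp : (2 * n + 1) ^ 2 = 4 * n ^ 2 + 4 * n + 1 := by ring
  omega
end
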